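/- The Cantor space 𝐂 is homeomorphic to the subspace L₂ ∖ T₂ of 𝐋₂ consisting of the infinite binary sequences, with the topology induced from the Scott topology on L₂. -/

import Mathlib

/-!
An infinite sequence is the supremum of the directed chain of its finite prefixes, so a Scott-open
set containing it contains one of these prefixes, hence every infinite sequence extending that
prefix: the inclusion of Cantor space is continuous. Conversely each set `{x | x n = b}` is Scott
open, because a directed set whose members are all undefined at `n` is bounded above by the
truncation of its supremum before `n`; so the coordinates of the inverse map are continuous.
-/

open Set

/-- Finite and infinite `σ`-valued sequences, encoded as functions `ℕ → Option σ` whose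
domain of definition is an initial segment of `ℕ`. -/
structure Lgen (σ : Type*) where
  toFun : ℕ → Option σ
  init : ∀ n, toFun (n + 1) ≠ none → toFun n ≠ none

/-- The initial-segment (prefix) partial order on `Lgen σ`. -/
instance Lgen.instPartialOrder {σ : Type*} : PartialOrder (Lgen σ) where
  le f g := ∀ (n : ℕ) (s : σ), f.toFun n = some s → g.toFun n = some s
  le_refl f n s h := h
  le_trans f g h hfg hgh n s hs := hgh n s (hfg n s hs)
  le_antisymm f g hfg hgf := by
    obtain ⟨ff, hf⟩ := f
    obtain ⟨gf, hg⟩ := g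
    have hfun : ff = gf := by
      funext n
      cases hfn : ff n with
      | some s =>
        have h2 : gf n = some s := hfg n s hfn
        exact h2.symm
      | none =>
        cases hgn : gf n with
        | some s =>
          have h2 : ff n = some s := hgf n s hgn
          rw [hfn] at h2
          exact absurd h2 (by simp)
        | none => rfl
    subst hfun
    rfl

/-- The finite sequence given by a list, as an element of `Lgen σ`. -/
def Lgen.ofList {σ : Type*} (l : List σ) : Lgen σ where
  toFun n := l[n]?
  init n h := by
    simp only [ne_eq, List.getElem?_eq_none_iff, not_le] at h ⊢
    omega

/-- The infinite binary tree with limits `L₂`: finite and infinite binary sequences with the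
initial-segment order. -/
abbrev L2 : Type := Lgen Bool

/-- The Scott topology of a preorder: opens are the upper sets `U` such that every nonempty
directed set whose least upper bound lies in `U` meets `U`. -/
def scottTopology (α : Type*) [Preorder α] : TopologicalSpace α where
  IsOpen U := IsUpperSet U ∧ ∀ d : Set α, d.Nonempty → DirectedOn (· ≤ ·) d →
      ∀ x, IsLUB d x → x ∈ U → (d ∩ U).Nonempty
  isOpen_univ := ⟨isUpperSet_univ, fun d hd _ _ _ _ => hd.imp fun y hy => ⟨hy, mem_univ y⟩⟩
  isOpen_inter := by
    rintro U V ⟨hU1, hU2⟩ ⟨hV1, hV2⟩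
    refine ⟨hU1.inter hV1, fun d hdne hdir x hlub hx => ?_⟩
    obtain ⟨a, ha, haU⟩ := hU2 d hdne hdir x hlub hx.1
    obtain ⟨b, hb, hbV⟩ := hV2 d hdne hdir x hlub hx.2
    obtain ⟨c, hc, hac, hbc⟩ := hdir a ha b hb
    exact ⟨c, hc, hU1 hac haU, hV1 hbc hbV⟩
  isOpen_sUnion := by
    intro S hS
    refine ⟨fun a b hab ha => ?_, fun d hdne hdir x hlub hx => ?_⟩
    · obtain ⟨U, hU, haU⟩ := ha
      exact ⟨U, hU, (hS U hU).1 hab haU⟩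
    · obtain ⟨U, hU, hxU⟩ := hx
      obtain ⟨a, ha, haU⟩ := (hS U hU).2 d hdne hdir x hlub hxU
      exact ⟨a, ha, U, hU, haU⟩

/-- `𝐋₂`: the infinite binary tree with limits carries the Scott topology. -/
instance : TopologicalSpace L2 := scottTopology L2

namespace Lgen

variable {σ : Type*}

protected lemma ext {x y : Lgen σ} (h : x.toFun = y.toFun) : x = y := by
  cases x; cases y; simpa using h

lemma toFun_eq_none_of_le {x : Lgen σ} {n m : ℕ} (h : x.toFun n = none) (hnm : n ≤ m) :
    x.toFun m = none := by
  induction hnm with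
  | refl => exact h
  | step _ ih => exact not_not.1 fun hm => x.init _ hm ih

lemma toFun_ofList_length (l : List σ) : (ofList l).toFun l.length = none := by
  simp [ofList]

lemma mem_range_ofList_of_toFun_eq_none {x : Lgen σ} {n : ℕ} (h : x.toFun n = none) :
    x ∈ range ofList := by
  classical
  have hN : ∃ N, x.toFun N = none := ⟨n, h⟩
  have hsome (i : ℕ) (hi : i < Nat.find hN) : (x.toFun i).isSome :=
    Option.isSome_iff_ne_none.2 (Nat.find_min hN hi)
  refine ⟨List.ofFn fun i : Fin (Nat.find hN) => (x.toFun i).get (hsome i i.2), Lgen.ext ?_⟩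
  funext m
  simp only [ofList, List.getElem?_ofFn]
  split_ifs with hm
  · exact Option.some_get _
  · exact (toFun_eq_none_of_le (Nat.find_spec hN) (not_lt.1 hm)).symm

lemma notMem_range_ofList_iff {x : Lgen σ} : x ∉ range ofList ↔ ∀ n, x.toFun n ≠ none := by
  refine ⟨fun hx n hn => hx (mem_range_ofList_of_toFun_eq_none hn), ?_⟩
  rintro h ⟨l, rfl⟩
  exact h _ (toFun_ofList_length l)

def ofSeq (f : ℕ → σ) : Lgen σ := ⟨fun n => some (f n), fun _ _ => Option.some_ne_none _⟩

lemma ofSeq_notMem_range_ofList (f : ℕ → σ) : ofSeq f ∉ range ofList :=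
  notMem_range_ofList_iff.2 fun _ => Option.some_ne_none _

def take (x : Lgen σ) (n : ℕ) : Lgen σ where
  toFun m := if m < n then x.toFun m else none
  init m h := by
    have hm : m + 1 < n := by_contra fun hm => h (if_neg hm)
    simpa [hm, show m < n by omega] using x.init m (by simpa [hm] using h)

lemma take_toFun_eq_some {x : Lgen σ} {n m : ℕ} {s : σ} :
    (x.take n).toFun m = some s ↔ m < n ∧ x.toFun m = some s := by
  simp [take]

lemma take_le (x : Lgen σ) (n : ℕ) : x.take n ≤ x :=
  fun _ _ hs => (take_toFun_eq_some.1 hs).2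

lemma monotone_take (x : Lgen σ) : Monotone x.take := fun _ _ hab _ _ hs =>
  let ⟨hm, hs⟩ := take_toFun_eq_some.1 hs
  take_toFun_eq_some.2 ⟨hm.trans_le hab, hs⟩

lemma isLUB_range_take (x : Lgen σ) : IsLUB (range x.take) x :=
  ⟨forall_mem_range.2 x.take_le, fun _ hz m s hs => hz ⟨m + 1, rfl⟩ m s
    (take_toFun_eq_some.2 ⟨m.lt_succ_self, hs⟩)⟩

lemma take_ofSeq_congr {f g : ℕ → σ} {n : ℕ} (h : ∀ i < n, f i = g i) :
    (ofSeq f).take n = (ofSeq g).take n :=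
  Lgen.ext <| funext fun m => by
    by_cases hm : m < n <;> simp [take, ofSeq, hm, h m]

def infiniteEquiv : (ℕ → σ) ≃ {x : Lgen σ | x ∉ range (ofList : List σ → Lgen σ)} where
  toFun f := ⟨ofSeq f, ofSeq_notMem_range_ofList f⟩
  invFun x n := (x.1.toFun n).get (Option.isSome_iff_ne_none.2 (notMem_range_ofList_iff.1 x.2 n))
  left_inv _ := rfl
  right_inv _ := Subtype.ext <| Lgen.ext <| funext fun _ => Option.some_get _

end Lgen

namespace L2

open Lgen

lemma exists_take_mem_of_isOpen {U : Set L2} (hU : IsOpen U) {x : L2} (hx : x ∈ U) :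
    ∃ n, x.take n ∈ U := by
  obtain ⟨_, ⟨n, rfl⟩, hn⟩ := hU.2 _ (range_nonempty _)
    (directedOn_range.2 x.monotone_take.directed_le) x x.isLUB_range_take hx
  exact ⟨n, hn⟩

lemma isOpen_setOf_toFun_eq_some (n : ℕ) (b : Bool) : IsOpen {x : L2 | x.toFun n = some b} := by
  refine ⟨fun x y hxy hx => hxy n b hx, fun d _ _ x hlub hx => ?_⟩
  by_contra hd
  have hnone : ∀ y ∈ d, y.toFun n = none := by
    intro y hy
    by_contra hy'
    obtain ⟨b', hb'⟩ := Option.ne_none_iff_exists'.1 hy'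
    have hxb' := hlub.1 hy n b' hb'
    rw [hx, Option.some_inj] at hxb'
    exact hd ⟨y, hy, hxb' ▸ hb'⟩
  have hub : x.take n ∈ upperBounds d := fun y hy m s hs =>
    take_toFun_eq_some.2 ⟨lt_of_not_ge fun hnm => by
      simp [toFun_eq_none_of_le (hnone y hy) hnm] at hs, hlub.1 hy m s hs⟩
  exact lt_irrefl n (take_toFun_eq_some.1 (hlub.2 hub n b hx)).1

lemma continuous_ofSeq : Continuous (ofSeq : (ℕ → Bool) → L2) := by
  refine continuous_def.2 fun U hU => isOpen_iff_forall_mem_open.2 fun f hf => ?_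
  obtain ⟨n, hn⟩ := exists_take_mem_of_isOpen hU hf
  refine ⟨(Finset.range n : Set ℕ).pi fun i => {f i}, fun g hg => ?_,
    isOpen_set_pi (Finset.range n).finite_toSet fun _ _ => isOpen_discrete _, fun _ _ => rfl⟩
  have hfg : (ofSeq f).take n = (ofSeq g).take n :=
    take_ofSeq_congr fun i hi => (hg i (by simpa using hi)).symm
  exact hU.1 (take_le _ n) (hfg ▸ hn)

def infiniteHomeomorph : (ℕ → Bool) ≃ₜ {x : L2 | x ∉ range (ofList : List Bool → L2)} where
  toEquiv := infiniteEquiv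
  continuous_toFun := continuous_ofSeq.subtype_mk _
  continuous_invFun := continuous_pi fun n => continuous_discrete_rng.2 fun b => by
    convert (isOpen_setOf_toFun_eq_some n b).preimage continuous_subtype_val using 1
    ext x
    exact ⟨fun h => h ▸ (Option.some_get _).symm,
      fun h => Option.some_injective _ ((Option.some_get _).trans h)⟩

end L2

/-- The Cantor space `ℕ → Bool` (with the product topology) is homeomorphic
to the subspace `L₂ ∖ T₂` of `𝐋₂` consisting of the infinite binary sequences, with the
topology induced from the Scott topology on `L₂`. -/
theorem statement9 :
    Nonempty ((ℕ → Bool) ≃ₜ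
      {x : L2 | x ∉ Set.range (Lgen.ofList : List Bool → L2)}) :=
  ⟨L2.infiniteHomeomorph⟩
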